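/- arXiv:1811.10573 — 4 statements merged into one kernel-verified Lean document; each statement's English description precedes it below -/
import Mathlib

section
/- Let G be an order-N real tensor with dimensions r₁×⋯×r_N, let n ∈ {1,…,N}, and let M ∈ ℝ^{s×r_n} be a matrix with orthonormal columns (MᵀM = I), where r_n ≤ s. Then ‖G ×_n M‖₂ = ‖G‖₂, where ‖·‖₂ denotes the tensor spectral norm. -/
open scoped BigOperators

/-- Euclidean (ℓ²) norm of a vector. -/
noncomputable def vnorm {n : ℕ} (v : Fin n → ℝ) : ℝ := Real.sqrt (∑ i, v i ^ 2)

/-- Frobenius norm: the ℓ² norm of all entries. -/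
noncomputable def fnorm {ι : Type*} [Fintype ι] (T : ι → ℝ) : ℝ := Real.sqrt (∑ i, T i ^ 2)

/-- Matrix–vector product. -/
noncomputable def matvec {m n : ℕ} (M : Fin m → Fin n → ℝ) (x : Fin n → ℝ) : Fin m → ℝ :=
  fun i => ∑ j, M i j * x j

/-- Matrix–matrix product. -/
noncomputable def matmul {m n p : ℕ} (A : Fin m → Fin n → ℝ) (B : Fin n → Fin p → ℝ) :
    Fin m → Fin p → ℝ :=
  fun i j => ∑ k, A i k * B k j

/-- Matrix spectral norm. -/
noncomputable def mnorm {m n : ℕ} (M : Fin m → Fin n → ℝ) : ℝ :=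
  sSup {r | ∃ x : Fin n → ℝ, vnorm x = 1 ∧ r = vnorm (matvec M x)}

/-- `I(M)`: the infimum of `‖Mx‖₂` over unit vectors `x`. -/
noncomputable def minf {m n : ℕ} (M : Fin m → Fin n → ℝ) : ℝ :=
  sInf {r | ∃ x : Fin n → ℝ, vnorm x = 1 ∧ r = vnorm (matvec M x)}

/-- Matrix Frobenius norm. -/
noncomputable def mfro {m n : ℕ} (M : Fin m → Fin n → ℝ) : ℝ :=
  Real.sqrt (∑ i, ∑ j, M i j ^ 2)

/-- The multilinear map `g_T` associated to an order-`(d+1)` tensor `T`;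
mode `0` is the output mode, modes `1,…,d` are the input modes. -/
noncomputable def gmap {d : ℕ} {s : Fin (d+1) → ℕ} (T : (∀ i, Fin (s i)) → ℝ)
    (x : ∀ i, Fin (s i) → ℝ) : Fin (s 0) → ℝ :=
  fun i₁ => ∑ j : (∀ i, Fin (s i)),
    if j 0 = i₁ then T j * ∏ k ∈ Finset.univ.erase (0 : Fin (d+1)), x k (j k) else 0

/-- The inputs `x i`, `i ≠ 0`, are all unit vectors. -/
def unitInputs {d : ℕ} {s : Fin (d+1) → ℕ} (x : ∀ i, Fin (s i) → ℝ) : Prop :=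
  ∀ i : Fin (d+1), i ≠ 0 → vnorm (x i) = 1

/-- Tensor spectral norm: supremum of `‖g_T(x₂,…,x_N)‖₂` over unit inputs. -/
noncomputable def tnorm {d : ℕ} {s : Fin (d+1) → ℕ} (T : (∀ i, Fin (s i)) → ℝ) : ℝ :=
  sSup {r | ∃ x : (∀ i, Fin (s i) → ℝ), unitInputs x ∧ r = vnorm (gmap T x)}

/-- `I(T)`: infimum of `‖g_T(x₂,…,x_N)‖₂` over unit inputs. -/
noncomputable def tinf {d : ℕ} {s : Fin (d+1) → ℕ} (T : (∀ i, Fin (s i)) → ℝ) : ℝ :=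
  sInf {r | ∃ x : (∀ i, Fin (s i) → ℝ), unitInputs x ∧ r = vnorm (gmap T x)}

/-- Tensor condition number `κ(T) = ‖T‖₂ / I(T)`. -/
noncomputable def tcond {d : ℕ} {s : Fin (d+1) → ℕ} (T : (∀ i, Fin (s i)) → ℝ) : ℝ :=
  tnorm T / tinf T

/-- Dimensions after replacing the size of mode `n` by `J`. -/
def repl {d : ℕ} (s : Fin (d+1) → ℕ) (n : Fin (d+1)) (J : ℕ) : Fin (d+1) → ℕ :=
  fun i => if i = n then J else s i

/-- Mode-`n` product `T ×ₙ A` with a matrix `A : Fin J → Fin (s n) → ℝ`: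
`(T ×ₙ A)(i₁,…,a,…,i_N) = ∑ₖ T(i₁,…,k,…,i_N) A(a,k)`. -/
noncomputable def modeProd {d : ℕ} {s : Fin (d+1) → ℕ} (T : (∀ i, Fin (s i)) → ℝ)
    (n : Fin (d+1)) {J : ℕ} (A : Fin J → Fin (s n) → ℝ) :
    (∀ i, Fin (repl s n J i)) → ℝ :=
  fun j => ∑ k : Fin (s n),
    T (fun i => if h : i = n then Fin.cast (congrArg s h.symm) k
        else Fin.cast (show repl s n J i = s i by simp [repl, h]) (j i)) *
      A (Fin.cast (show repl s n J n = J by simp [repl]) (j n)) k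

/-- Multilinear transformation of a tensor: `multiProd X B = X ×₁ B₁ ×₂ ⋯ ×_N B_N`. -/
noncomputable def multiProd {d : ℕ} {s R : Fin (d+1) → ℕ}
    (X : (∀ i, Fin (s i)) → ℝ) (B : ∀ l, Fin (R l) → Fin (s l) → ℝ) :
    (∀ l, Fin (R l)) → ℝ :=
  fun j => ∑ k : (∀ l, Fin (s l)), X k * ∏ l, B l (j l) (k l)

/-- Dimensions of `partialContract`: modes in `E` are kept at size `s l`,
the other modes are contracted down to size `R l`. -/
def keepDims {d : ℕ} (s R : Fin (d+1) → ℕ) (E : Finset (Fin (d+1))) : Fin (d+1) → ℕ :=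
  fun l => if l ∈ E then s l else R l

/-- Contract every mode `l ∉ E` of `X` with `(A l)ᵀ`; keep the modes in `E` untouched. -/
noncomputable def partialContract {d : ℕ} {s R : Fin (d+1) → ℕ}
    (X : (∀ i, Fin (s i)) → ℝ) (A : ∀ l, Fin (s l) → Fin (R l) → ℝ)
    (E : Finset (Fin (d+1))) : (∀ l, Fin (keepDims s R E l)) → ℝ :=
  multiProd X (fun l a b =>
    if h : l ∈ E then
      (if b = Fin.cast (show keepDims s R E l = s l by simp [keepDims, h]) a then (1:ℝ) else 0)
    else A l b (Fin.cast (show keepDims s R E l = R l by simp [keepDims, h]) a))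


section AuxSpectral

lemma vnorm_nonneg' {m : ℕ} (v : Fin m → ℝ) : 0 ≤ vnorm v := Real.sqrt_nonneg _

lemma vnorm_comp_cast {m m' : ℕ} (e : m' = m) (v : Fin m → ℝ) :
    vnorm (fun i : Fin m' => v (Fin.cast e i)) = vnorm v := by
  unfold vnorm
  congr 1
  exact Fintype.sum_equiv (finCongr e) _ _ (fun i => rfl)

lemma vnorm_smul' {m : ℕ} (c : ℝ) (v : Fin m → ℝ) :
    vnorm (fun i => c * v i) = |c| * vnorm v := by
  unfold vnorm
  rw [← Real.sqrt_sq_eq_abs, ← Real.sqrt_mul (sq_nonneg c)]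
  congr 1
  rw [Finset.mul_sum]
  exact Finset.sum_congr rfl fun i _ => by ring

lemma vnorm_matvec_orth {m k : ℕ} (M : Fin m → Fin k → ℝ)
    (hM : ∀ a a' : Fin k, ∑ i, M i a * M i a' = if a = a' then (1:ℝ) else 0)
    (y : Fin k → ℝ) : vnorm (matvec M y) = vnorm y := by
  unfold vnorm matvec
  congr 1
  calc ∑ i, (∑ j, M i j * y j) ^ 2
      = ∑ i, ∑ j, ∑ j', (M i j * y j) * (M i j' * y j') := by
        refine Finset.sum_congr rfl fun i _ => ?_
        rw [sq, Finset.sum_mul_sum]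
    _ = ∑ j, ∑ j', (y j * y j') * ∑ i, M i j * M i j' := by
        rw [Finset.sum_comm]
        refine Finset.sum_congr rfl fun j _ => ?_
        rw [Finset.sum_comm]
        refine Finset.sum_congr rfl fun j' _ => ?_
        rw [Finset.mul_sum]
        exact Finset.sum_congr rfl fun i _ => by ring
    _ = ∑ j, y j ^ 2 := by
        refine Finset.sum_congr rfl fun j _ => ?_
        simp [hM, mul_ite, mul_one, mul_zero, Finset.sum_ite_eq, sq]

lemma vnorm_transpose_matvec_le {m k : ℕ} (M : Fin m → Fin k → ℝ)
    (hM : ∀ a a' : Fin k, ∑ i, M i a * M i a' = if a = a' then (1:ℝ) else 0)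
    (z : Fin m → ℝ) : vnorm (fun j => ∑ i, M i j * z i) ≤ vnorm z := by
  set w : Fin k → ℝ := fun j => ∑ i, M i j * z i with hw
  have key : vnorm w ^ 2 ≤ vnorm z * vnorm w := by
    have h1 : vnorm w ^ 2 = ∑ i, z i * matvec M w i := by
      rw [vnorm, Real.sq_sqrt (Finset.sum_nonneg fun j _ => sq_nonneg _)]
      unfold matvec
      calc ∑ j, w j ^ 2 = ∑ j, (∑ i, M i j * z i) * w j := by
            refine Finset.sum_congr rfl fun j _ => ?_; rw [sq]
        _ = ∑ j, ∑ i, z i * (M i j * w j) := by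
            refine Finset.sum_congr rfl fun j _ => ?_
            rw [Finset.sum_mul]
            exact Finset.sum_congr rfl fun i _ => by ring
        _ = ∑ i, z i * ∑ j, M i j * w j := by
            rw [Finset.sum_comm]
            exact Finset.sum_congr rfl fun i _ => by rw [Finset.mul_sum]
    have h2 : (∑ i, z i * matvec M w i) ≤ vnorm z * vnorm (matvec M w) := by
      have h3 := Finset.sum_mul_sq_le_sq_mul_sq Finset.univ z (matvec M w)
      have h4 : (∑ i, z i * matvec M w i) ≤
          Real.sqrt ((∑ i, z i ^ 2) * ∑ i, matvec M w i ^ 2) := by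
        rcases le_or_gt (∑ i, z i * matvec M w i) 0 with h | h
        · exact h.trans (Real.sqrt_nonneg _)
        · exact Real.le_sqrt' h |>.mpr h3
      calc (∑ i, z i * matvec M w i) ≤ _ := h4
        _ = vnorm z * vnorm (matvec M w) := by
          rw [vnorm, vnorm, ← Real.sqrt_mul (Finset.sum_nonneg fun i _ => sq_nonneg _)]
    rw [h1]
    calc (∑ i, z i * matvec M w i) ≤ vnorm z * vnorm (matvec M w) := h2
      _ = vnorm z * vnorm w := by rw [vnorm_matvec_orth M hM w]
  rcases eq_or_lt_of_le (vnorm_nonneg' w) with h0 | h0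
  · rw [← h0]; exact vnorm_nonneg' z
  · nlinarith [key, h0]

end AuxSpectral


section ModeAux

variable {d : ℕ} {r : Fin (d+1) → ℕ} {sdim : ℕ}

/-- Merge an index of `G` with an index `a` for the new mode `n`. -/
def mkIdx (n : Fin (d+1)) (j : ∀ i, Fin (r i)) (a : Fin sdim) :
    ∀ i, Fin (repl r n sdim i) :=
  fun i => if h : i = n then Fin.cast (show sdim = repl r n sdim i by simp [repl, h]) a
    else Fin.cast (show r i = repl r n sdim i by simp [repl, h]) (j i)

/-- Replace mode `n` of an index of `G ×ₙ M` by `k`. -/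
def subIdx (n : Fin (d+1)) (j : ∀ i, Fin (repl r n sdim i)) (k : Fin (r n)) :
    ∀ i, Fin (r i) :=
  fun i => if h : i = n then Fin.cast (congrArg r h.symm) k
    else Fin.cast (show repl r n sdim i = r i by simp [repl, h]) (j i)

lemma subIdx_mkIdx (n : Fin (d+1)) (j : ∀ i, Fin (r i)) (a : Fin sdim) :
    subIdx n (mkIdx n j a) (j n) = j := by
  funext i
  unfold subIdx
  split
  · next h => subst h; exact Fin.ext (by simp)
  · next h => exact Fin.ext (by simp [mkIdx, h])

lemma cast_mkIdx (n : Fin (d+1)) (j : ∀ i, Fin (r i)) (a : Fin sdim) :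
    Fin.cast (show repl r n sdim n = sdim by simp [repl]) (mkIdx n j a n) = a :=
  Fin.ext (by simp [mkIdx])

/-- The index bijection underlying mode-`n` contraction. -/
def modeEquiv (n : Fin (d+1)) :
    ((∀ i, Fin (repl r n sdim i)) × Fin (r n)) ≃ ((∀ i, Fin (r i)) × Fin sdim) where
  toFun p := (subIdx n p.1 p.2, Fin.cast (show repl r n sdim n = sdim by simp [repl]) (p.1 n))
  invFun q := (mkIdx n q.1 q.2, q.1 n)
  left_inv p := by
    refine Prod.ext ?_ ?_
    · funext i
      dsimp only
      unfold mkIdx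
      split
      · next h => subst h; exact Fin.ext (by simp)
      · next h => exact Fin.ext (by simp [subIdx, h])
    · show subIdx n p.1 p.2 n = p.2
      unfold subIdx
      first
      | rw [dif_pos trivial]
      | rw [dif_pos rfl]
      exact Fin.ext (by simp)
  right_inv q := by
    refine Prod.ext ?_ ?_
    · exact subIdx_mkIdx n q.1 q.2
    · exact cast_mkIdx n q.1 q.2

/-- Pull back the inputs of `G ×ₙ M` to inputs of `G`: mode `n` becomes `Mᵀ xₙ`. -/
noncomputable def xdown (n : Fin (d+1)) (M : Fin sdim → Fin (r n) → ℝ)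
    (x : ∀ i, Fin (repl r n sdim i) → ℝ) : ∀ i, Fin (r i) → ℝ :=
  fun i => if h : i = n then
      fun k => ∑ a : Fin sdim, M a (Fin.cast (congrArg r h) k) *
        x i (Fin.cast (show sdim = repl r n sdim i by simp [repl, h]) a)
    else fun k => x i (Fin.cast (show r i = repl r n sdim i by simp [repl, h]) k)

/-- Push inputs of `G` to inputs of `G ×ₙ M`: mode `n` becomes `M yₙ`. -/
noncomputable def xup (n : Fin (d+1)) (M : Fin sdim → Fin (r n) → ℝ)
    (y : ∀ i, Fin (r i) → ℝ) : ∀ i, Fin (repl r n sdim i) → ℝ :=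
  fun i => if h : i = n then
      fun a => ∑ k : Fin (r n),
        M (Fin.cast (show repl r n sdim i = sdim by simp [repl, h]) a) k * y n k
    else fun b => y i (Fin.cast (show repl r n sdim i = r i by simp [repl, h]) b)

lemma gmap_modeProd_sum (G : (∀ i, Fin (r i)) → ℝ) (n : Fin (d+1))
    (M : Fin sdim → Fin (r n) → ℝ) (x : ∀ i, Fin (repl r n sdim i) → ℝ)
    (i₁ : Fin (repl r n sdim 0)) :
    gmap (modeProd G n M) x i₁ =
      ∑ j' : (∀ i, Fin (r i)), ∑ a : Fin sdim,
        (if (mkIdx n j' a) 0 = i₁ then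
          G j' * M a (j' n) * ∏ l ∈ Finset.univ.erase 0, x l (mkIdx n j' a l) else 0) := by
  have hrn : repl r n sdim n = sdim := by simp [repl]
  set F : ((∀ i, Fin (repl r n sdim i)) × Fin (r n)) → ℝ := fun p =>
    if p.1 0 = i₁ then
      G (subIdx n p.1 p.2) * M (Fin.cast hrn (p.1 n)) p.2 *
        ∏ l ∈ Finset.univ.erase 0, x l (p.1 l)
    else 0 with hF
  calc gmap (modeProd G n M) x i₁ = ∑ p, F p := by
        rw [Fintype.sum_prod_type]
        unfold gmap modeProd
        refine Finset.sum_congr rfl fun j _ => ?_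
        by_cases hc : j 0 = i₁
        · rw [if_pos hc, Finset.sum_mul]
          refine Finset.sum_congr rfl fun k _ => ?_
          rw [hF]
          simp only [if_pos hc]
          rfl
        · simp [hF, hc]
    _ = ∑ q, F ((modeEquiv n).symm q) := (Equiv.sum_comp (modeEquiv n).symm F).symm
    _ = _ := by
        rw [Fintype.sum_prod_type]
        refine Finset.sum_congr rfl fun j' _ => Finset.sum_congr rfl fun a _ => ?_
        show F (mkIdx n j' a, j' n) = _
        rw [hF]
        simp only [subIdx_mkIdx, cast_mkIdx]

end ModeAux


section ModeAux2

variable {d : ℕ} {r : Fin (d+1) → ℕ} {sdim : ℕ}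

lemma gmap_modeProd_ne (G : (∀ i, Fin (r i)) → ℝ) (n : Fin (d+1)) (hn : n ≠ 0)
    (M : Fin sdim → Fin (r n) → ℝ) (x : ∀ i, Fin (repl r n sdim i) → ℝ)
    (i₁ : Fin (repl r n sdim 0)) :
    gmap (modeProd G n M) x i₁ =
      gmap G (xdown n M x)
        (Fin.cast (show repl r n sdim 0 = r 0 by simp [repl, Ne.symm hn]) i₁) := by
  have h0 : repl r n sdim 0 = r 0 := by simp [repl, Ne.symm hn]
  have hrn : repl r n sdim n = sdim := by simp [repl]
  have hmem : n ∈ Finset.univ.erase (0 : Fin (d+1)) :=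
    Finset.mem_erase.mpr ⟨hn, Finset.mem_univ n⟩
  rw [gmap_modeProd_sum]
  unfold gmap
  refine Finset.sum_congr rfl fun j' _ => ?_
  have hval : ∀ a : Fin sdim, ((mkIdx n j' a 0 : Fin _) = i₁ ↔ j' 0 = Fin.cast h0 i₁) := by
    intro a
    rw [Fin.ext_iff, Fin.ext_iff]
    simp [mkIdx, Ne.symm hn]
  by_cases hc : j' 0 = Fin.cast h0 i₁
  · simp only [hval, if_pos hc]
    rw [← Finset.mul_prod_erase _ _ hmem]
    have hxn : xdown n M x n (j' n) =
        ∑ a : Fin sdim, M a (j' n) * x n (Fin.cast hrn.symm a) := by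
      simp only [xdown]
      first
      | rw [dif_pos trivial]
      | rw [dif_pos rfl]
      rfl
    rw [hxn, Finset.sum_mul, Finset.mul_sum]
    refine Finset.sum_congr rfl fun a _ => ?_
    rw [← Finset.mul_prod_erase _ _ hmem]
    have h1 : x n (mkIdx n j' a n) = x n (Fin.cast hrn.symm a) := by
      congr 1
      simp only [mkIdx]
      first
      | rw [dif_pos trivial]
      | rw [dif_pos rfl]
    have h2 : ∏ l ∈ (Finset.univ.erase 0).erase n, x l (mkIdx n j' a l)
        = ∏ l ∈ (Finset.univ.erase 0).erase n, xdown n M x l (j' l) := by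
      refine Finset.prod_congr rfl fun l hl => ?_
      have hln : l ≠ n := (Finset.mem_erase.mp hl).1
      simp only [mkIdx, xdown]
      rw [dif_neg hln, dif_neg hln]
    rw [h1, h2]
    ring
  · simp only [hval, if_neg hc, Finset.sum_const_zero]

lemma gmap_modeProd_zero (G : (∀ i, Fin (r i)) → ℝ)
    (M : Fin sdim → Fin (r 0) → ℝ)
    (x : ∀ i, Fin (repl r 0 sdim i) → ℝ) (i₁ : Fin (repl r 0 sdim 0)) :
    gmap (modeProd G 0 M) x i₁ =
      matvec M (gmap G (xdown 0 M x))
        (Fin.cast (show repl r 0 sdim 0 = sdim by simp [repl]) i₁) := by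
  have h0 : repl r 0 sdim 0 = sdim := by simp [repl]
  rw [gmap_modeProd_sum]
  unfold matvec gmap
  have hprod : ∀ (j' : ∀ i, Fin (r i)) (a : Fin sdim),
      ∏ l ∈ Finset.univ.erase 0, x l (mkIdx 0 j' a l)
        = ∏ l ∈ Finset.univ.erase 0, xdown 0 M x l (j' l) := by
    intro j' a
    refine Finset.prod_congr rfl fun l hl => ?_
    have hl0 : l ≠ 0 := (Finset.mem_erase.mp hl).1
    simp only [mkIdx, xdown]
    rw [dif_neg hl0, dif_neg hl0]
  have hrhs : ∀ k : Fin (r 0),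
      M (Fin.cast h0 i₁) k *
        (∑ j' : (∀ i, Fin (r i)),
          if j' 0 = k then G j' * ∏ l ∈ Finset.univ.erase 0, xdown 0 M x l (j' l) else 0)
      = ∑ j' : (∀ i, Fin (r i)),
          (if j' 0 = k then
            M (Fin.cast h0 i₁) k * G j' * ∏ l ∈ Finset.univ.erase 0, xdown 0 M x l (j' l)
          else 0) := by
    intro k
    rw [Finset.mul_sum]
    refine Finset.sum_congr rfl fun j' _ => ?_
    by_cases hc : j' 0 = k
    · rw [if_pos hc, if_pos hc]; ring
    · simp [hc]
  calc (∑ j' : (∀ i, Fin (r i)), ∑ a : Fin sdim,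
        if (mkIdx 0 j' a 0 : Fin _) = i₁ then
          G j' * M a (j' 0) * ∏ l ∈ Finset.univ.erase 0, x l (mkIdx 0 j' a l) else 0)
      = ∑ j' : (∀ i, Fin (r i)),
          M (Fin.cast h0 i₁) (j' 0) * G j' *
            ∏ l ∈ Finset.univ.erase 0, xdown 0 M x l (j' l) := by
        refine Finset.sum_congr rfl fun j' _ => ?_
        have hcond : ∀ a : Fin sdim,
            ((mkIdx 0 j' a 0 : Fin _) = i₁ ↔ a = Fin.cast h0 i₁) := by
          intro a
          rw [Fin.ext_iff, Fin.ext_iff]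
          simp [mkIdx]
        calc (∑ a : Fin sdim,
              if (mkIdx 0 j' a 0 : Fin _) = i₁ then
                G j' * M a (j' 0) * ∏ l ∈ Finset.univ.erase 0, x l (mkIdx 0 j' a l) else 0)
            = ∑ a : Fin sdim,
              (if a = Fin.cast h0 i₁ then
                G j' * M a (j' 0) *
                  ∏ l ∈ Finset.univ.erase 0, xdown 0 M x l (j' l) else 0) := by
              refine Finset.sum_congr rfl fun a _ => ?_
              rw [hprod]
              by_cases hc : a = Fin.cast h0 i₁
              · rw [if_pos ((hcond a).mpr hc), if_pos hc]
              · rw [if_neg (fun h => hc ((hcond a).mp h)), if_neg hc]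
          _ = G j' * M (Fin.cast h0 i₁) (j' 0) *
                ∏ l ∈ Finset.univ.erase 0, xdown 0 M x l (j' l) := by
              rw [Finset.sum_ite_eq' Finset.univ (Fin.cast h0 i₁)]
              simp
          _ = _ := by ring
    _ = ∑ k : Fin (r 0), ∑ j' : (∀ i, Fin (r i)),
          (if j' 0 = k then
            M (Fin.cast h0 i₁) k * G j' *
              ∏ l ∈ Finset.univ.erase 0, xdown 0 M x l (j' l) else 0) := by
        rw [Finset.sum_comm]
        refine Finset.sum_congr rfl fun j' _ => ?_
        rw [Finset.sum_ite_eq Finset.univ (j' 0)]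
        simp
    _ = _ := by
        refine (Finset.sum_congr rfl fun k _ => ?_).symm
        exact hrhs k

lemma orth_recover {m k : ℕ} (M : Fin m → Fin k → ℝ)
    (hM : ∀ a a' : Fin k, ∑ i, M i a * M i a' = if a = a' then (1:ℝ) else 0)
    (v : Fin k → ℝ) (j : Fin k) :
    ∑ a : Fin m, M a j * (∑ k', M a k' * v k') = v j := by
  calc ∑ a : Fin m, M a j * (∑ k', M a k' * v k')
      = ∑ a : Fin m, ∑ k', v k' * (M a j * M a k') := by
        refine Finset.sum_congr rfl fun a _ => ?_
        rw [Finset.mul_sum]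
        exact Finset.sum_congr rfl fun k' _ => by ring
    _ = ∑ k', v k' * ∑ a, M a j * M a k' := by
        rw [Finset.sum_comm]
        exact Finset.sum_congr rfl fun k' _ => by rw [Finset.mul_sum]
    _ = v j := by
        simp [hM, mul_ite, mul_one, mul_zero, Finset.sum_ite_eq]

lemma xdown_xup (n : Fin (d+1)) (M : Fin sdim → Fin (r n) → ℝ)
    (hM : ∀ a a' : Fin (r n), ∑ i, M i a * M i a' = if a = a' then (1:ℝ) else 0)
    (y : ∀ i, Fin (r i) → ℝ) : xdown n M (xup n M y) = y := by
  funext i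
  by_cases h : i = n
  · subst h
    funext k
    have step : xdown i M (xup i M y) i k =
        ∑ a : Fin sdim, M a k *
          (xup i M y) i (Fin.cast (show sdim = repl r i sdim i by simp [repl]) a) := by
      simp only [xdown]
      first
      | rw [dif_pos trivial]
      | rw [dif_pos rfl]
      rfl
    have step2 : ∀ a : Fin sdim,
        (xup i M y) i (Fin.cast (show sdim = repl r i sdim i by simp [repl]) a)
          = ∑ k' : Fin (r i), M a k' * y i k' := by
      intro a
      simp only [xup]
      first
      | rw [dif_pos trivial]
      | rw [dif_pos rfl]
      rfl
    rw [step, Finset.sum_congr rfl fun a _ => by rw [step2 a]]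
    exact orth_recover M hM (y i) k
  · funext k
    simp only [xdown, xup]
    rw [dif_neg h, dif_neg h]
    rfl

lemma vnorm_xdown_ne (n : Fin (d+1)) (M : Fin sdim → Fin (r n) → ℝ)
    (x : ∀ i, Fin (repl r n sdim i) → ℝ) {i : Fin (d+1)} (h : i ≠ n) :
    vnorm (xdown n M x i) = vnorm (x i) := by
  simp only [xdown]
  rw [dif_neg h]
  exact vnorm_comp_cast _ _

lemma vnorm_xup_ne (n : Fin (d+1)) (M : Fin sdim → Fin (r n) → ℝ)
    (y : ∀ i, Fin (r i) → ℝ) {i : Fin (d+1)} (h : i ≠ n) :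
    vnorm (xup n M y i) = vnorm (y i) := by
  simp only [xup]
  rw [dif_neg h]
  exact vnorm_comp_cast _ _

lemma vnorm_xup_n (n : Fin (d+1)) (M : Fin sdim → Fin (r n) → ℝ)
    (hM : ∀ a a' : Fin (r n), ∑ i, M i a * M i a' = if a = a' then (1:ℝ) else 0)
    (y : ∀ i, Fin (r i) → ℝ) :
    vnorm (xup n M y n) = vnorm (y n) := by
  have h1 : xup n M y n = fun a : Fin (repl r n sdim n) =>
      matvec M (y n) (Fin.cast (show repl r n sdim n = sdim by simp [repl]) a) := by
    funext a
    simp only [xup]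
    first
      | rw [dif_pos trivial]
      | rw [dif_pos rfl]
    rfl
  rw [h1, vnorm_comp_cast _ (matvec M (y n)), vnorm_matvec_orth M hM]

lemma vnorm_xdown_n_le (n : Fin (d+1)) (M : Fin sdim → Fin (r n) → ℝ)
    (hM : ∀ a a' : Fin (r n), ∑ i, M i a * M i a' = if a = a' then (1:ℝ) else 0)
    (x : ∀ i, Fin (repl r n sdim i) → ℝ) :
    vnorm (xdown n M x n) ≤ vnorm (x n) := by
  set z : Fin sdim → ℝ :=
    fun a => x n (Fin.cast (show sdim = repl r n sdim n by simp [repl]) a) with hz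
  have h1 : xdown n M x n = fun k => ∑ a, M a k * z a := by
    funext k
    simp only [xdown]
    first
      | rw [dif_pos trivial]
      | rw [dif_pos rfl]
    rfl
  rw [h1]
  calc vnorm (fun k => ∑ a, M a k * z a) ≤ vnorm z := vnorm_transpose_matvec_le M hM z
    _ = vnorm (x n) := vnorm_comp_cast _ _

lemma gmap_scale {s : Fin (d+1) → ℕ} (T : (∀ i, Fin (s i)) → ℝ) (n : Fin (d+1))
    (hn : n ≠ 0) (x y : ∀ i, Fin (s i) → ℝ) (c : ℝ)
    (hxy : ∀ i, i ≠ n → x i = y i) (hc : x n = fun k => c * y n k)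
    (i₁ : Fin (s 0)) : gmap T x i₁ = c * gmap T y i₁ := by
  unfold gmap
  rw [Finset.mul_sum]
  refine Finset.sum_congr rfl fun j _ => ?_
  by_cases h : j 0 = i₁
  · rw [if_pos h, if_pos h]
    have hmem : n ∈ Finset.univ.erase (0 : Fin (d+1)) :=
      Finset.mem_erase.mpr ⟨hn, Finset.mem_univ n⟩
    rw [← Finset.mul_prod_erase _ _ hmem, ← Finset.mul_prod_erase _ (fun l => y l (j l)) hmem,
      hc]
    have h2 : ∏ l ∈ (Finset.univ.erase 0).erase n, x l (j l)
        = ∏ l ∈ (Finset.univ.erase 0).erase n, y l (j l) :=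
      Finset.prod_congr rfl fun l hl => by rw [hxy l (Finset.mem_erase.mp hl).1]
    rw [h2]
    ring
  · simp [h]

lemma vnorm_zero_forall {m : ℕ} (v : Fin m → ℝ) (h : vnorm v = 0) : ∀ i, v i = 0 := by
  intro i
  have hsum : ∑ j, v j ^ 2 = 0 := by
    have := (Real.sqrt_eq_zero (Finset.sum_nonneg fun j _ => sq_nonneg _)).mp h
    exact this
  have := (Finset.sum_eq_zero_iff_of_nonneg fun j _ => sq_nonneg (v j)).mp hsum i
    (Finset.mem_univ i)
  exact pow_eq_zero_iff (by norm_num) |>.mp this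

end ModeAux2

/-- Lemma 4.4 of the paper. For an order-`N` tensor `G` with dimensions
`r₁×⋯×r_N`, any mode `n`, and a matrix `M ∈ ℝ^{s×r_n}` with orthonormal columns, `r_n ≤ s`,
the spectral norm is preserved: `‖G ×ₙ M‖₂ = ‖G‖₂`. -/
theorem spectral_norm_mode_prod_orthonormal {d : ℕ} {r : Fin (d+1) → ℕ} {sdim : ℕ}
    (G : (∀ i, Fin (r i)) → ℝ) (n : Fin (d+1))
    (M : Fin sdim → Fin (r n) → ℝ)
    (hdim : r n ≤ sdim)
    (hM : ∀ k k' : Fin (r n), ∑ i, M i k * M i k' = if k = k' then (1:ℝ) else 0) :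
    tnorm (modeProd G n M) = tnorm G := by
  by_cases hn : n = 0
  · subst hn
    unfold tnorm
    apply csSup_eq_csSup_of_forall_exists_le
    · rintro a ⟨x, hx, rfl⟩
      refine ⟨vnorm (gmap G (xdown 0 M x)), ⟨xdown 0 M x, ?_, rfl⟩, le_of_eq ?_⟩
      · intro i hi
        rw [vnorm_xdown_ne 0 M x hi]
        exact hx i hi
      · have h1 : gmap (modeProd G 0 M) x = fun i₁ =>
            matvec M (gmap G (xdown 0 M x))
              (Fin.cast (show repl r 0 sdim 0 = sdim by simp [repl]) i₁) :=
          funext fun i₁ => gmap_modeProd_zero G M x i₁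
        rw [h1, vnorm_comp_cast _ (matvec M (gmap G (xdown 0 M x))), vnorm_matvec_orth M hM]
    · rintro b ⟨y, hy, rfl⟩
      refine ⟨vnorm (gmap (modeProd G 0 M) (xup 0 M y)), ⟨xup 0 M y, ?_, rfl⟩, le_of_eq ?_⟩
      · intro i hi
        rw [vnorm_xup_ne 0 M y hi]
        exact hy i hi
      · have h1 : gmap (modeProd G 0 M) (xup 0 M y) = fun i₁ =>
            matvec M (gmap G (xdown 0 M (xup 0 M y)))
              (Fin.cast (show repl r 0 sdim 0 = sdim by simp [repl]) i₁) :=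
          funext fun i₁ => gmap_modeProd_zero G M (xup 0 M y) i₁
        rw [h1, vnorm_comp_cast _ (matvec M (gmap G (xdown 0 M (xup 0 M y)))),
          vnorm_matvec_orth M hM, xdown_xup 0 M hM y]
  · by_cases hr : r n = 0
    · haveI hEmpty : IsEmpty (Fin (r n)) := by rw [hr]; infer_instance
      have hzero : modeProd G n M = fun _ => 0 := by
        funext j
        unfold modeProd
        rw [Finset.univ_eq_empty, Finset.sum_empty]
      have ht2 : tnorm G = 0 := by
        unfold tnorm
        have hset : {r' : ℝ | ∃ x, unitInputs x ∧ r' = vnorm (gmap G x)} = ∅ := by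
          rw [Set.eq_empty_iff_forall_notMem]
          rintro a ⟨x, hx, rfl⟩
          have h1 := hx n hn
          have h2 : vnorm (x n) = 0 := by
            unfold vnorm
            rw [Finset.univ_eq_empty, Finset.sum_empty, Real.sqrt_zero]
          rw [h2] at h1
          exact one_ne_zero h1.symm
        rw [hset, Real.sSup_empty]
      have ht1 : tnorm (modeProd G n M) = 0 := by
        unfold tnorm
        have hsub : {r' : ℝ | ∃ x, unitInputs x ∧
            r' = vnorm (gmap (modeProd G n M) x)} ⊆ {0} := by
          rintro a ⟨x, hx, rfl⟩
          have hg : gmap (modeProd G n M) x = fun _ => 0 := by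
            funext i₁
            rw [hzero]
            unfold gmap
            apply Finset.sum_eq_zero
            intro j _
            split <;> simp
          rw [hg]
          simp [vnorm]
        rcases Set.subset_singleton_iff_eq.mp hsub with h | h
        · rw [h, Real.sSup_empty]
        · rw [h, csSup_singleton]
      rw [ht1, ht2]
    · have hrpos : 0 < r n := Nat.pos_of_ne_zero hr
      unfold tnorm
      apply csSup_eq_csSup_of_forall_exists_le
      · rintro a ⟨x, hx, rfl⟩
        set x' := xdown n M x with hx'
        have hval : vnorm (gmap (modeProd G n M) x) = vnorm (gmap G x') := by
          have h1 : gmap (modeProd G n M) x = fun i₁ =>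
              gmap G x'
                (Fin.cast (show repl r n sdim 0 = r 0 by simp [repl, Ne.symm hn]) i₁) :=
            funext fun i₁ => gmap_modeProd_ne G n hn M x i₁
          rw [h1, vnorm_comp_cast _ (gmap G x')]
        set t := vnorm (x' n) with htt
        have ht1 : t ≤ 1 := by
          have h2 := vnorm_xdown_n_le n M hM x
          rw [hx n hn] at h2
          exact h2
        have ht0 : 0 ≤ t := vnorm_nonneg' _
        have hx'unit : ∀ i, i ≠ 0 → i ≠ n → vnorm (x' i) = 1 := by
          intro i hi0 hin
          rw [hx', vnorm_xdown_ne n M x hin]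
          exact hx i hi0
        by_cases htz : t = 0
        · have hx'0 : ∀ k, x' n k = 0 := vnorm_zero_forall _ htz
          have hg : vnorm (gmap G x') = 0 := by
            have h3 : gmap G x' = fun _ => 0 := by
              funext i₁
              have h4 := gmap_scale G n hn x' x' 0 (fun i _ => rfl)
                (funext fun k => by rw [hx'0 k]; ring) i₁
              rw [h4]
              ring
            rw [h3]
            simp [vnorm]
          set e0 : Fin (r n) → ℝ := fun k => if k = ⟨0, hrpos⟩ then 1 else 0 with he0
          set y := Function.update x' n e0 with hy
          have hyu : unitInputs y := by
            intro i hi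
            by_cases hin : i = n
            · subst hin
              rw [hy, Function.update_self]
              unfold vnorm
              have h5 : ∀ k : Fin (r i), e0 k ^ 2 = if k = ⟨0, hrpos⟩ then 1 else 0 := by
                intro k
                by_cases hk : k = ⟨0, hrpos⟩ <;> simp [he0, hk]
              rw [Finset.sum_congr rfl fun k _ => h5 k,
                Finset.sum_ite_eq' Finset.univ (⟨0, hrpos⟩ : Fin (r i)) (fun _ => (1:ℝ))]
              simp
            · rw [hy, Function.update_of_ne hin]
              exact hx'unit i hi hin
          refine ⟨vnorm (gmap G y), ⟨y, hyu, rfl⟩, ?_⟩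
          rw [hval, hg]
          exact vnorm_nonneg' _
        · have htpos : 0 < t := lt_of_le_of_ne ht0 (Ne.symm htz)
          set y := Function.update x' n (fun k => t⁻¹ * x' n k) with hy
          have hyu : unitInputs y := by
            intro i hi
            by_cases hin : i = n
            · subst hin
              rw [hy, Function.update_self, vnorm_smul', ← htt,
                abs_of_pos (inv_pos.mpr htpos)]
              field_simp
            · rw [hy, Function.update_of_ne hin]
              exact hx'unit i hi hin
          have hkey : gmap G x' = fun i₁ => t * gmap G y i₁ := by
            funext i₁
            refine gmap_scale G n hn x' y t ?_ ?_ i₁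
            · intro i hin
              rw [hy, Function.update_of_ne hin]
            · rw [hy, Function.update_self]
              funext k
              field_simp
          refine ⟨vnorm (gmap G y), ⟨y, hyu, rfl⟩, ?_⟩
          rw [hval, hkey, vnorm_smul', abs_of_pos htpos]
          nlinarith [vnorm_nonneg' (gmap G y)]
      · rintro b ⟨y, hy, rfl⟩
        refine ⟨vnorm (gmap (modeProd G n M) (xup n M y)), ⟨xup n M y, ?_, rfl⟩,
          le_of_eq ?_⟩
        · intro i hi
          by_cases hin : i = n
          · rw [hin, vnorm_xup_n n M hM y]
            exact hy n hn
          · rw [vnorm_xup_ne n M y hin]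
            exact hy i hi
        · symm
          have h1 : gmap (modeProd G n M) (xup n M y) = fun i₁ =>
              gmap G (xdown n M (xup n M y))
                (Fin.cast (show repl r n sdim 0 = r 0 by simp [repl, Ne.symm hn]) i₁) :=
            funext fun i₁ => gmap_modeProd_ne G n hn M (xup n M y) i₁
          rw [h1, vnorm_comp_cast _ (gmap G (xdown n M (xup n M y))), xdown_xup n M hM y]
end

section
/- Let X be an order-N real tensor all of whose N dimensions equal s, and let 1 ≤ R ≤ s. Then there exist matrices A^{(1)},…,A^{(N)} ∈ ℝ^{s×R}, each with orthonormal columns, such that the core tensor G = X ×₁ A^{(1)ᵀ} ×₂ A^{(2)ᵀ} ⋯ ×_N A^{(N)ᵀ} satisfies ‖X‖_F ≥ ‖G‖_F ≥ (R/s)^{N/2} · ‖X‖_F. -/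
open scoped BigOperators

open Finset

lemma ite_mul_sum {n : ℕ} (a b : Fin n) :
    (∑ i, (if i = a then (1:ℝ) else 0) * (if i = b then (1:ℝ) else 0))
      = if a = b then (1:ℝ) else 0 := by
  rw [Finset.sum_eq_single a]
  · simp
  · intro i _ hi; simp [hi]
  · simp

lemma card_filter_mem {s R : ℕ} (hR : 1 ≤ R) (a : Fin s) :
    ((Finset.powersetCard R (Finset.univ : Finset (Fin s))).filter (fun S => a ∈ S)).card
      = (s-1).choose (R-1) := by
  have h1 : ((Finset.univ : Finset (Fin s)).erase a).card = s - 1 := by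
    simp [Finset.card_erase_of_mem]
  rw [← h1, ← Finset.card_powersetCard (R-1)]
  apply Finset.card_bij (fun S _ => S.erase a)
  · intro S hS
    simp only [mem_filter, Finset.mem_powersetCard] at hS
    rw [Finset.mem_powersetCard]
    refine ⟨Finset.erase_subset_erase a hS.1.1, ?_⟩
    rw [Finset.card_erase_of_mem hS.2, hS.1.2]
  · intro S hS S' hS' h
    simp only [mem_filter] at hS hS'
    rw [← Finset.insert_erase hS.2, ← Finset.insert_erase hS'.2, h]
  · intro U hU
    rw [Finset.mem_powersetCard] at hU
    have haU : a ∉ U := fun h => (Finset.mem_erase.mp (hU.1 h)).1 rfl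
    refine ⟨insert a U, ?_, ?_⟩
    · simp only [mem_filter, Finset.mem_powersetCard]
      exact ⟨⟨Finset.subset_univ _, by rw [Finset.card_insert_of_notMem haU, hU.2]; omega⟩,
        Finset.mem_insert_self a U⟩
    · rw [Finset.erase_insert haU]

lemma exists_good_subsets {N s R : ℕ} (hR : 1 ≤ R) (hRs : R ≤ s)
    (f : (Fin N → Fin s) → ℝ) :
    ∃ T : Fin N → Finset (Fin s), (∀ l, (T l).card = R) ∧
      ((R:ℝ)/(s:ℝ))^N * ∑ jj, f jj ≤
        ∑ jj ∈ Finset.univ.filter (fun jj => ∀ l, jj l ∈ T l), f jj := by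
  classical
  set P := Finset.powersetCard R (Finset.univ : Finset (Fin s)) with hP
  have hs1 : 1 ≤ s := le_trans hR hRs
  have hPcard : P.card = s.choose R := by simp [hP, Finset.card_powersetCard]
  set c : ℕ := (s-1).choose (R-1) with hc
  set p : ℕ := s.choose R with hp
  have hppos : 0 < p := Nat.choose_pos hRs
  -- key identity:  s * c = p * R
  have hnat : s * c = p * R := by
    obtain ⟨n, rfl⟩ : ∃ n, s = n + 1 := ⟨s - 1, by omega⟩
    obtain ⟨k, rfl⟩ : ∃ k, R = k + 1 := ⟨R - 1, by omega⟩
    simpa [hc, hp] using Nat.add_one_mul_choose_eq n k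
  have hratio : (R:ℝ)/(s:ℝ) = (c:ℝ)/(p:ℝ) := by
    rw [div_eq_div_iff (by positivity) (by exact_mod_cast hppos.ne')]
    have : R * p = c * s := by rw [Nat.mul_comm R p, Nat.mul_comm c s]; exact hnat.symm
    exact_mod_cast this
  -- average computation
  have hsumT : ∑ T ∈ Fintype.piFinset (fun _ : Fin N => P),
      (∑ jj ∈ Finset.univ.filter (fun jj => ∀ l, jj l ∈ T l), f jj)
      = (c:ℝ)^N * ∑ jj, f jj := by
    have hg : ∀ T : Fin N → Finset (Fin s),
        (∑ jj ∈ Finset.univ.filter (fun jj => ∀ l, jj l ∈ T l), f jj)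
        = ∑ jj, f jj * ∏ l, (if jj l ∈ T l then (1:ℝ) else 0) := by
      intro T
      rw [Finset.sum_filter]
      refine Finset.sum_congr rfl fun jj _ => ?_
      rw [Finset.prod_boole]
      by_cases h : ∀ l, jj l ∈ T l <;> simp [h]
    simp only [hg]
    rw [Finset.sum_comm]
    rw [Finset.mul_sum]
    refine Finset.sum_congr rfl fun jj _ => ?_
    rw [← Finset.mul_sum, ← Finset.prod_univ_sum (fun _ : Fin N => P) (fun l S => if jj l ∈ S then (1:ℝ) else 0)]
    have : ∀ l : Fin N, (∑ S ∈ P, (if jj l ∈ S then (1:ℝ) else 0)) = (c:ℝ) := by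
      intro l
      rw [Finset.sum_boole]
      norm_cast
      exact card_filter_mem hR (jj l)
    simp only [this]
    rw [Finset.prod_const, Finset.card_univ, Fintype.card_fin]
    ring
  have hne : (Fintype.piFinset (fun _ : Fin N => P)).Nonempty := by
    rw [Fintype.piFinset_nonempty]
    intro l
    rw [Finset.powersetCard_nonempty]
    simpa using hRs
  have hconst : ∑ _T ∈ Fintype.piFinset (fun _ : Fin N => P),
      (((R:ℝ)/(s:ℝ))^N * ∑ jj, f jj) = (c:ℝ)^N * ∑ jj, f jj := by
    rw [Finset.sum_const, Fintype.card_piFinset]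
    simp only [hPcard, ← hp, Finset.prod_const, Finset.card_univ, Fintype.card_fin]
    rw [nsmul_eq_mul, hratio]
    push_cast
    rw [div_pow]
    field_simp
  obtain ⟨T, hT, hle⟩ := Finset.exists_le_of_sum_le hne (le_of_eq (hconst.trans hsumT.symm))
  refine ⟨T, fun l => ?_, hle⟩
  have := Fintype.mem_piFinset.mp hT l
  rw [hP, Finset.mem_powersetCard] at this
  exact this.2

/-- Lemma 4.8 of the paper. For an order-`N` tensor `X` all of whose
dimensions equal `s`, and `1 ≤ R ≤ s`, there exist matrices `A^{(1)},…,A^{(N)} ∈ ℝ^{s×R}`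
with orthonormal columns such that the core
`G = X ×₁ A^{(1)ᵀ} ⋯ ×_N A^{(N)ᵀ}`, `G(k) = ∑_j X(j) ∏_l A^{(l)}(j_l, k_l)`,
satisfies `‖X‖_F ≥ ‖G‖_F ≥ (R/s)^{N/2} ‖X‖_F`. -/
theorem interlaced_hosvd_core_bound {N sdim R : ℕ} (hR1 : 1 ≤ R) (hRs : R ≤ sdim)
    (X : (Fin N → Fin sdim) → ℝ) :
    ∃ A : Fin N → Fin sdim → Fin R → ℝ,
      (∀ l : Fin N, ∀ k k' : Fin R, ∑ i, A l i k * A l i k' = if k = k' then (1:ℝ) else 0) ∧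
      fnorm (fun k : Fin N → Fin R =>
        ∑ jj : Fin N → Fin sdim, X jj * ∏ l, A l (jj l) (k l)) ≤ fnorm X ∧
      ((R : ℝ) / (sdim : ℝ)) ^ ((N : ℝ) / 2) * fnorm X ≤
        fnorm (fun k : Fin N → Fin R =>
          ∑ jj : Fin N → Fin sdim, X jj * ∏ l, A l (jj l) (k l)) := by
  classical
  obtain ⟨T, hTcard, hTle⟩ := exists_good_subsets hR1 hRs (fun jj => X jj ^ 2)
  set σ : ∀ l : Fin N, Fin R ≃o {x // x ∈ T l} := fun l => (T l).orderIsoOfFin (hTcard l)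
    with hσ
  set A : Fin N → Fin sdim → Fin R → ℝ :=
    fun l i k => if i = (σ l k : Fin sdim) then (1:ℝ) else 0 with hA
  set e : (Fin N → Fin R) → (Fin N → Fin sdim) := fun k l => (σ l (k l) : Fin sdim) with he
  have einj : Function.Injective e := by
    intro k k' h
    funext l
    have h1 : (σ l (k l) : Fin sdim) = (σ l (k' l) : Fin sdim) := congrFun h l
    exact (σ l).injective (Subtype.ext h1)
  -- entries of the core
  have hG : ∀ k : Fin N → Fin R,
      (∑ jj : Fin N → Fin sdim, X jj * ∏ l, A l (jj l) (k l)) = X (e k) := by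
    intro k
    have : ∀ jj : Fin N → Fin sdim,
        (∏ l, A l (jj l) (k l)) = if jj = e k then (1:ℝ) else 0 := by
      intro jj
      rw [hA]
      rw [Finset.prod_boole]
      congr 1
      simp only [eq_iff_iff]
      constructor
      · intro h; funext l; exact h l (Finset.mem_univ l)
      · intro h l _; exact congrFun h l
    simp only [this, mul_ite, mul_one, mul_zero]
    rw [Finset.sum_ite_eq' Finset.univ (e k) X]
    simp
  -- the image of e is the box
  have himg : Finset.image e Finset.univ
      = Finset.univ.filter (fun jj => ∀ l, jj l ∈ T l) := by
    ext jj
    simp only [Finset.mem_image, Finset.mem_filter, Finset.mem_univ, true_and]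
    constructor
    · rintro ⟨k, rfl⟩
      intro l
      exact (σ l (k l)).2
    · intro h
      exact ⟨fun l => (σ l).symm ⟨jj l, h l⟩, by
        funext l; simp [he]⟩
  have hsum : (∑ k : Fin N → Fin R, X (e k) ^ 2)
      = ∑ jj ∈ Finset.univ.filter (fun jj => ∀ l, jj l ∈ T l), X jj ^ 2 := by
    rw [← himg, Finset.sum_image (fun a _ b _ h => einj h)]
  refine ⟨A, ?_, ?_, ?_⟩
  · intro l k k'
    have := ite_mul_sum ((σ l k : Fin sdim)) ((σ l k' : Fin sdim))
    rw [hA]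
    rw [this]
    congr 1
    simp only [eq_iff_iff]
    constructor
    · intro h; exact (σ l).injective (Subtype.ext h)
    · intro h; rw [h]
  · -- upper bound
    unfold fnorm
    apply Real.sqrt_le_sqrt
    simp only [hG]
    rw [hsum]
    exact Finset.sum_le_sum_of_subset_of_nonneg (Finset.filter_subset _ _)
      (fun jj _ _ => sq_nonneg _)
  · -- lower bound
    unfold fnorm
    simp only [hG]
    rw [hsum]
    have hnn : (0:ℝ) ≤ (R:ℝ)/(sdim:ℝ) := by positivity
    have hrpow : ((R:ℝ)/(sdim:ℝ)) ^ ((N:ℝ)/2) = Real.sqrt (((R:ℝ)/(sdim:ℝ))^N) := by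
      rw [Real.sqrt_eq_rpow, ← Real.rpow_natCast ((R:ℝ)/(sdim:ℝ)) N, ← Real.rpow_mul hnn,
        mul_one_div]
    rw [hrpow, ← Real.sqrt_mul (by positivity)]
    exact Real.sqrt_le_sqrt hTle
end

section
/- Let X be an order-N real tensor all of whose dimensions equal s, let 1 ≤ R ≤ s, and for each l ∈ {2,…,N} let A^{(l)} ∈ ℝ^{s×R} have orthonormal columns. Let Y^{(1)} = X ×₂ A^{(2)ᵀ} ⋯ ×_N A^{(N)ᵀ} and suppose ‖Y^{(1)}‖_F ≥ (R/s)^{N/2} ‖X‖_F (as is guaranteed when Tucker-ALS is initialized with the interlaced HOSVD). For distinct i, j ∈ {2,…,N}, let Y^{(i,j,1)} be X contracted in mode l with A^{(l)ᵀ} for every l ∈ {2,…,N}∖{i,j}, and let dA^{(i)}, dA^{(j)} ∈ ℝ^{s×R} satisfy ‖dA^{(i)}‖_F ≤ ε and ‖dA^{(j)}‖_F ≤ ε. Then ‖Y^{(i,j,1)} ×_i dA^{(i)ᵀ} ×_j dA^{(j)ᵀ}‖_F ≤ ε² (s/R)^{N/2} ‖Y^{(1)}‖_F. -/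
open scoped BigOperators

/-!
Contracting one mode of a tensor with a matrix multiplies its Frobenius norm by at most the
operator norm of that matrix; splitting off one mode at a time, the same holds for a contraction
in all modes with the product of the operator norms. Orthonormal columns give operator norm at
most `1` (Bessel), and the operator norm is at most the Frobenius norm, so the second-order term
has Frobenius norm at most `ε² ‖X‖_F`. The assumption on `Y⁽¹⁾` turns `‖X‖_F` into
`(s/R)^{N/2} ‖Y⁽¹⁾‖_F`.
-/

open Finset

theorem Fin.sum_univ_pi_cons {n : ℕ} {α : Fin (n + 1) → Type*} [∀ l, Fintype (α l)]
    {M : Type*} [AddCommMonoid M] (f : (∀ l, α l) → M) :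
    ∑ k, f k = ∑ a, ∑ r, f (Fin.cons a r) := by
  rw [← Fintype.sum_prod_type']
  exact (Fintype.sum_equiv (Fin.consEquiv α) _ _ fun _ => rfl).symm

theorem sum_sq_multilinear_le {n : ℕ} {α β : Fin n → Type*} [∀ l, Fintype (α l)]
    [∀ l, Fintype (β l)] (X : (∀ l, α l) → ℝ) (B : ∀ l, β l → α l → ℝ) (c : Fin n → ℝ)
    (hc : ∀ l, 0 ≤ c l)
    (hB : ∀ l (t : α l → ℝ), ∑ q, (∑ k, B l q k * t k) ^ 2 ≤ c l * ∑ k, t k ^ 2) :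
    ∑ j : (∀ l, β l), (∑ k, X k * ∏ l, B l (j l) (k l)) ^ 2 ≤ (∏ l, c l) * ∑ k, X k ^ 2 := by
  induction n with
  | zero => simp only [Fintype.sum_unique, Fin.prod_univ_zero, mul_one, one_mul, le_refl]
  | succ n ih =>
    set Y : α 0 → (∀ l : Fin n, β l.succ) → ℝ := fun a j =>
      ∑ r, X (Fin.cons a r) * ∏ l, B l.succ (j l) (r l) with hY
    have entry : ∀ b j, ∑ k, X k * ∏ l, B l (Fin.cons b j l) (k l) = ∑ a, B 0 b a * Y a j := by
      intro b j
      rw [Fin.sum_univ_pi_cons]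
      refine sum_congr rfl fun a _ => ?_
      simp only [hY, Fin.prod_univ_succ, Fin.cons_zero, Fin.cons_succ, mul_sum]
      exact sum_congr rfl fun r _ => by ring
    calc ∑ j : (∀ l, β l), (∑ k, X k * ∏ l, B l (j l) (k l)) ^ 2
        = ∑ j, ∑ b, (∑ a, B 0 b a * Y a j) ^ 2 := by
          rw [Fin.sum_univ_pi_cons, sum_comm]; simp only [entry]
      _ ≤ ∑ j, c 0 * ∑ a, Y a j ^ 2 := sum_le_sum fun j _ => hB 0 (Y · j)
      _ = c 0 * ∑ a, ∑ j, Y a j ^ 2 := by rw [← mul_sum, sum_comm]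
      _ ≤ c 0 * ∑ a, (∏ l : Fin n, c l.succ) * ∑ r, X (Fin.cons a r) ^ 2 := by
          gcongr with a
          · exact hc 0
          · exact ih (fun r => X (Fin.cons a r)) (fun l => B l.succ) _ (fun l => hc _)
              (fun l => hB _)
      _ = (∏ l, c l) * ∑ k, X k ^ 2 := by
          rw [Fin.prod_univ_succ, Fin.sum_univ_pi_cons, ← mul_sum, mul_assoc]

theorem sum_sq_transpose_mul_le_of_orthonormal {ι κ : Type*} [Fintype ι] [Fintype κ]
    [DecidableEq κ] (A : ι → κ → ℝ)
    (hA : ∀ k k', ∑ i, A i k * A i k' = if k = k' then (1:ℝ) else 0) (t : ι → ℝ) :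
    ∑ q, (∑ k, A k q * t k) ^ 2 ≤ ∑ k, t k ^ 2 := by
  let v : κ → EuclideanSpace ℝ ι := fun q => WithLp.toLp 2 (fun i => A i q)
  have hv : Orthonormal ℝ v := by
    rw [orthonormal_iff_ite]
    intro k k'
    simpa [v, PiLp.inner_apply, mul_comm] using hA k k'
  simpa [v, PiLp.inner_apply, EuclideanSpace.norm_sq_eq, mul_comm] using
    hv.sum_inner_products_le (x := WithLp.toLp 2 t) (s := univ)

theorem sum_sq_transpose_mul_le_mfro_sq {m n : ℕ} (M : Fin m → Fin n → ℝ) (t : Fin m → ℝ) :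
    ∑ q, (∑ k, M k q * t k) ^ 2 ≤ mfro M ^ 2 * ∑ k, t k ^ 2 := by
  rw [mfro, Real.sq_sqrt (by positivity), sum_comm, sum_mul]
  exact sum_le_sum fun q _ => sum_mul_sq_le_sq_mul_sq _ _ _

theorem sum_sq_transpose_mul_le_of_mfro_le {m n : ℕ} {M : Fin m → Fin n → ℝ} {ε : ℝ}
    (hM : mfro M ≤ ε) (t : Fin m → ℝ) :
    ∑ q, (∑ k, M k q * t k) ^ 2 ≤ ε ^ 2 * ∑ k, t k ^ 2 :=
  (sum_sq_transpose_mul_le_mfro_sq M t).trans <| by gcongr; exact Real.sqrt_nonneg _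

def contractFactor {d : ℕ} {s R : Fin (d+1) → ℕ} (A : ∀ l, Fin (s l) → Fin (R l) → ℝ)
    (E : Finset (Fin (d+1))) (l : Fin (d+1)) : Fin (keepDims s R E l) → Fin (s l) → ℝ :=
  fun a b =>
    if h : l ∈ E then
      (if b = Fin.cast (show keepDims s R E l = s l by simp [keepDims, h]) a then (1:ℝ) else 0)
    else A l b (Fin.cast (show keepDims s R E l = R l by simp [keepDims, h]) a)

theorem partialContract_eq_multiProd {d : ℕ} {s R : Fin (d+1) → ℕ} (X : (∀ i, Fin (s i)) → ℝ)
    (A : ∀ l, Fin (s l) → Fin (R l) → ℝ) (E : Finset (Fin (d+1))) :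
    partialContract X A E = multiProd X (contractFactor A E) := rfl

theorem fnorm_partialContract_le {d : ℕ} {s R : Fin (d+1) → ℕ} (X : (∀ i, Fin (s i)) → ℝ)
    (A : ∀ l, Fin (s l) → Fin (R l) → ℝ) (E : Finset (Fin (d+1))) (C : Fin (d+1) → ℝ)
    (hC : ∀ l ∉ E, 0 ≤ C l)
    (hA : ∀ l ∉ E, ∀ t : Fin (s l) → ℝ, ∑ q, (∑ k, A l k q * t k) ^ 2 ≤ C l ^ 2 * ∑ k, t k ^ 2) :
    fnorm (partialContract X A E) ≤ (∏ l ∈ Eᶜ, C l) * fnorm X := by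
  have hsq := sum_sq_multilinear_le X (contractFactor A E) (fun l => if l ∈ Eᶜ then C l ^ 2 else 1)
    (fun l => by split_ifs <;> positivity) fun l t => by
      by_cases hl : l ∈ E
      · simp only [contractFactor, dif_pos hl, if_neg fun h => mem_compl.1 h hl, one_mul, ite_mul,
          zero_mul, sum_ite_eq', mem_univ, if_true]
        exact (Fin.sum_congr' (fun k => t k ^ 2) _).le
      · simp only [contractFactor, dif_neg hl, if_pos (mem_compl.2 hl)]
        exact (Fin.sum_congr' (fun q => (∑ k, A l k q * t k) ^ 2) _).le.trans (hA l hl t)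
  rw [prod_ite_mem, univ_inter, prod_pow] at hsq
  rw [partialContract_eq_multiProd, fnorm, fnorm]
  calc √(∑ j, multiProd X (contractFactor A E) j ^ 2)
      ≤ √((∏ l ∈ Eᶜ, C l) ^ 2 * ∑ k, X k ^ 2) := Real.sqrt_le_sqrt hsq
    _ = (∏ l ∈ Eᶜ, C l) * √(∑ k, X k ^ 2) := by
      rw [Real.sqrt_mul (sq_nonneg _), Real.sqrt_sq (prod_nonneg fun l hl => hC l (mem_compl.1 hl))]

theorem le_div_rpow_mul_of_div_rpow_mul_le {a b x y : ℝ} (ha : 0 < a) (hb : 0 < b) (p : ℝ)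
    (h : (a / b) ^ p * x ≤ y) : x ≤ (b / a) ^ p * y := by
  rw [← inv_div, Real.inv_rpow (div_pos ha hb).le,
    le_inv_mul_iff₀ (Real.rpow_pos_of_pos (div_pos ha hb) _)]
  exact h

/-- per-term inequality of Theorem 4.9 of the paper. `X` is an order-`N`
tensor (`N = d+1`, mode `0` playing the role of mode 1) with all dimensions equal to `sdim`,
`1 ≤ R ≤ sdim`, each `A l` (`l ≠ 0`) has orthonormal columns,
`Y¹ = X ×₂ A²ᵀ ⋯ ×_N A^Nᵀ` satisfies `‖Y¹‖_F ≥ (R/s)^{N/2}‖X‖_F` (guaranteed by interlaced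
HOSVD initialization), and `‖dA^{(i)}‖_F ≤ ε`, `‖dA^{(j)}‖_F ≤ ε`. Then
`‖Y^{(i,j,1)} ×ᵢ dA^{(i)ᵀ} ×ⱼ dA^{(j)ᵀ}‖_F ≤ ε² (s/R)^{N/2} ‖Y¹‖_F`. -/
theorem tucker_pp_second_order_term_frobenius {d sdim R : ℕ} (hR1 : 1 ≤ R) (hRs : R ≤ sdim)
    (X : (∀ _ : Fin (d+1), Fin sdim) → ℝ)
    (A : Fin (d+1) → Fin sdim → Fin R → ℝ)
    (hA : ∀ l : Fin (d+1), l ≠ 0 →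
      ∀ k k' : Fin R, ∑ i, A l i k * A l i k' = if k = k' then (1:ℝ) else 0)
    (hY : ((R : ℝ) / (sdim : ℝ)) ^ (((d : ℝ) + 1) / 2) * fnorm X ≤
      fnorm (partialContract X A {0}))
    (i j : Fin (d+1)) (hi : i ≠ 0) (hj : j ≠ 0) (hij : i ≠ j)
    (dAi dAj : Fin sdim → Fin R → ℝ) (ε : ℝ)
    (hdAi : mfro dAi ≤ ε) (hdAj : mfro dAj ≤ ε) :
    fnorm (partialContract X (Function.update (Function.update A i dAi) j dAj) {0}) ≤
      ε^2 * ((sdim : ℝ) / (R : ℝ)) ^ (((d : ℝ) + 1) / 2) * fnorm (partialContract X A {0}) := by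
  have hε : 0 ≤ ε := (Real.sqrt_nonneg _).trans hdAi
  set C : Fin (d+1) → ℝ := Function.update (Function.update (fun _ => 1) i ε) j ε
  have hC : ∀ l ∉ ({0} : Finset (Fin (d+1))), 0 ≤ C l := fun l _ => by
    simp only [C, Function.update_apply]; split_ifs <;> positivity
  have hmode : ∀ l ∉ ({0} : Finset (Fin (d+1))), ∀ t : Fin sdim → ℝ,
      ∑ q, (∑ k, Function.update (Function.update A i dAi) j dAj l k q * t k) ^ 2
        ≤ C l ^ 2 * ∑ k, t k ^ 2 := by
    intro l hl t
    simp only [C, Function.update_apply]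
    split_ifs
    · exact sum_sq_transpose_mul_le_of_mfro_le hdAj t
    · exact sum_sq_transpose_mul_le_of_mfro_le hdAi t
    · simpa using sum_sq_transpose_mul_le_of_orthonormal (A l) (hA l (by simpa using hl)) t
  have hprod : ∏ l ∈ ({0} : Finset (Fin (d+1)))ᶜ, C l = ε ^ 2 := by
    rw [prod_update_of_mem (by simpa using hj), prod_update_of_mem (by simp [hi, hij]),
      prod_const_one]
    ring
  have hX := le_div_rpow_mul_of_div_rpow_mul_le (by exact_mod_cast hR1)
    (by exact_mod_cast hR1.trans hRs) _ hY
  calc _ ≤ ε ^ 2 * fnorm X := hprod ▸ fnorm_partialContract_le X _ {0} C hC hmode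
    _ ≤ _ := by rw [mul_assoc]; gcongr
end

section
/- Let N ≥ 2 and let T be an order-N real tensor with dimensions s₁×⋯×s_N. Then there exist orthogonal matrices Q₂ ∈ ℝ^{s₂×s₂}, …, Q_N ∈ ℝ^{s_N×s_N} such that the tensor V = T ×₂ Q₂ ×₃ ⋯ ×_N Q_N satisfies ‖V‖₂ = ‖T‖₂ and I(V) = I(T) (hence κ(V) = κ(T) whenever I(T) > 0), and the first fiber v ∈ ℝ^{s₁} of V, defined by v(i) = V(i,1,…,1), satisfies ‖v‖₂ = I(T). -/
open scoped BigOperators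

/-! By compactness, `I(T)` is attained at unit inputs `x₂, …, x_N`. Complete each `x_l` to an
orthogonal matrix `Q_l` with `x_l` as its first row. Since `g_V(x) = g_T(x₂ Q₂, …, x_N Q_N)` and
`x ↦ x Q` permutes the unit sphere, `V` and `T` have the same set of values `‖g(x)‖`; and the first
fiber of `V` is exactly `g_T(x₂, …, x_N)`. -/

open Finset Matrix

lemma vnorm_eq_sqrt_dotProduct {n : ℕ} (v : Fin n → ℝ) : vnorm v = Real.sqrt (v ⬝ᵥ v) := by
  simp [vnorm, dotProduct, sq]

lemma vnorm_eq_norm_toLp {n : ℕ} (v : Fin n → ℝ) :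
    vnorm v = ‖(WithLp.toLp 2 v : EuclideanSpace ℝ (Fin n))‖ := by
  simp [vnorm, EuclideanSpace.norm_eq]

lemma continuous_vnorm {n : ℕ} : Continuous (vnorm (n := n)) := by
  simp_rw [funext vnorm_eq_norm_toLp]
  exact continuous_norm.comp (PiLp.continuous_toLp 2 _)

lemma isCompact_setOf_vnorm_eq_one (n : ℕ) : IsCompact {v : Fin n → ℝ | vnorm v = 1} := by
  have : {v : Fin n → ℝ | vnorm v = 1} =
      WithLp.ofLp '' Metric.sphere (0 : EuclideanSpace ℝ (Fin n)) 1 := by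
    ext v
    refine ⟨fun hv => ⟨WithLp.toLp 2 v, by simpa [vnorm_eq_norm_toLp] using hv, rfl⟩, ?_⟩
    rintro ⟨w, hw, rfl⟩
    simpa [vnorm_eq_norm_toLp] using hw
  rw [this]
  exact (isCompact_sphere _ _).image (PiLp.continuous_ofLp 2 _)

lemma vnorm_single {n : ℕ} (i : Fin n) : vnorm (Pi.single i 1) = 1 := by
  simp [vnorm_eq_sqrt_dotProduct]

lemma vnorm_vecMul_of_mul_transpose_eq_one {n : ℕ} {M : Matrix (Fin n) (Fin n) ℝ}
    (hM : M * Mᵀ = 1) (v : Fin n → ℝ) : vnorm (v ᵥ* M) = vnorm v := by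
  rw [vnorm_eq_sqrt_dotProduct, vnorm_eq_sqrt_dotProduct, ← dotProduct_mulVec,
    ← mulVec_transpose, mulVec_mulVec, hM, one_mulVec]

lemma mul_transpose_eq_one_iff {n : ℕ} {M : Matrix (Fin n) (Fin n) ℝ} :
    M * Mᵀ = 1 ↔ ∀ a b, ∑ c, M a c * M b c = if a = b then (1:ℝ) else 0 := by
  simp [← Matrix.ext_iff, mul_apply, one_apply]

lemma exists_mul_transpose_eq_one_row_eq {n : ℕ} (i : Fin n) {x : Fin n → ℝ}
    (hx : vnorm x = 1) : ∃ Q : Matrix (Fin n) (Fin n) ℝ, Q * Qᵀ = 1 ∧ Q i = x := by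
  have hunit : Orthonormal ℝ (({i} : Set (Fin n)).domRestrict fun _ => WithLp.toLp 2 x) := by
    rw [orthonormal_subsingleton_iff]
    simpa [vnorm_eq_norm_toLp] using hx
  obtain ⟨b, hb⟩ := hunit.exists_orthonormalBasis_extension_of_card_eq (by simp)
  refine ⟨Matrix.of fun a => WithLp.ofLp (b a), ?_, funext fun c => by simp [hb i rfl]⟩
  ext a c
  have := (orthonormal_iff_ite.mp b.orthonormal) c a
  simpa [mul_apply, one_apply, PiLp.inner_apply, mul_comm, eq_comm] using this

noncomputable def contract {d : ℕ} {s : Fin (d+1) → ℕ} (X : (∀ i, Fin (s i)) → ℝ)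
    (e : ∀ l, Fin (s l) → ℝ) : ℝ :=
  ∑ j, X j * ∏ l, e l (j l)

def gmapNorms {d : ℕ} {s : Fin (d+1) → ℕ} (T : (∀ i, Fin (s i)) → ℝ) : Set ℝ :=
  {r | ∃ x : (∀ i, Fin (s i) → ℝ), unitInputs x ∧ r = vnorm (gmap T x)}

section Tensor

variable {d : ℕ} {s : Fin (d+1) → ℕ}

lemma multiProd_apply {R : Fin (d+1) → ℕ} (X : (∀ i, Fin (s i)) → ℝ)
    (B : ∀ l, Matrix (Fin (R l)) (Fin (s l)) ℝ) (j : ∀ l, Fin (R l)) :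
    multiProd X B j = contract X fun l => B l (j l) :=
  rfl

lemma contract_multiProd {R : Fin (d+1) → ℕ} (X : (∀ i, Fin (s i)) → ℝ)
    (B : ∀ l, Matrix (Fin (R l)) (Fin (s l)) ℝ) (e : ∀ l, Fin (R l) → ℝ) :
    contract (multiProd X B) e = contract X fun l => e l ᵥ* B l := by
  simp only [contract, multiProd, vecMul, dotProduct, Fintype.prod_sum, sum_mul, mul_sum]
  rw [sum_comm]
  refine sum_congr rfl fun k _ => sum_congr rfl fun j _ => ?_
  rw [prod_mul_distrib]
  ring

lemma gmap_apply_eq_contract (T : (∀ i, Fin (s i)) → ℝ) (x : ∀ i, Fin (s i) → ℝ)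
    (i : Fin (s 0)) : gmap T x i = contract T (Function.update x 0 (Pi.single i 1)) := by
  refine sum_congr rfl fun j _ => ?_
  have hrest : ∀ l ∈ univ.erase 0, Function.update x 0 (Pi.single i 1) l (j l) = x l (j l) :=
    fun l hl => by rw [Function.update_of_ne (ne_of_mem_erase hl)]
  rw [← mul_prod_erase univ _ (mem_univ 0), prod_congr rfl hrest]
  simp [Pi.single_apply]

lemma gmap_update_zero (T : (∀ i, Fin (s i)) → ℝ) (x : ∀ i, Fin (s i) → ℝ)
    (v : Fin (s 0) → ℝ) : gmap T (Function.update x 0 v) = gmap T x := by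
  funext i
  simp [gmap_apply_eq_contract]

lemma gmap_multiProd (T : (∀ i, Fin (s i)) → ℝ) (B : ∀ l, Matrix (Fin (s l)) (Fin (s l)) ℝ)
    (hB0 : B 0 = 1) (x : ∀ i, Fin (s i) → ℝ) :
    gmap (multiProd T B) x = gmap T fun l => x l ᵥ* B l := by
  funext i
  rw [gmap_apply_eq_contract, gmap_apply_eq_contract, contract_multiProd]
  congr 1
  funext l
  rcases eq_or_ne l 0 with rfl | hl
  · simp [hB0]
  · simp [hl]

lemma gmapNorms_multiProd (T : (∀ i, Fin (s i)) → ℝ) (B : ∀ l, Matrix (Fin (s l)) (Fin (s l)) ℝ)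
    (hB0 : B 0 = 1) (hB : ∀ l, B l * (B l)ᵀ = 1) : gmapNorms (multiProd T B) = gmapNorms T := by
  ext r
  constructor
  · rintro ⟨x, hx, rfl⟩
    refine ⟨fun l => x l ᵥ* B l, fun l hl => ?_, by rw [gmap_multiProd T B hB0]⟩
    exact (vnorm_vecMul_of_mul_transpose_eq_one (hB l) _).trans (hx l hl)
  · rintro ⟨y, hy, rfl⟩
    have hBt : ∀ l, (B l)ᵀ * B l = 1 := fun l => mul_eq_one_comm.mp (hB l)
    refine ⟨fun l => y l ᵥ* (B l)ᵀ, fun l hl => ?_, ?_⟩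
    · have : (B l)ᵀ * (B l)ᵀᵀ = 1 := by rw [transpose_transpose, hBt]
      exact (vnorm_vecMul_of_mul_transpose_eq_one this _).trans (hy l hl)
    · simp only [gmap_multiProd T B hB0, vecMul_vecMul, hBt, vecMul_one]

lemma exists_unit_vnorm_gmap_eq_tinf (hs : ∀ i, 0 < s i) (T : (∀ i, Fin (s i)) → ℝ) :
    ∃ x : ∀ i, Fin (s i) → ℝ, (∀ l, vnorm (x l) = 1) ∧ vnorm (gmap T x) = tinf T := by
  set S := Set.univ.pi fun l => {v : Fin (s l) → ℝ | vnorm v = 1}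
  have himage : gmapNorms T = (fun x => vnorm (gmap T x)) '' S := by
    ext r
    constructor
    · rintro ⟨x, hx, rfl⟩
      refine ⟨Function.update x 0 (Pi.single ⟨0, hs 0⟩ 1), fun l _ => ?_, by
        simp [gmap_update_zero]⟩
      rcases eq_or_ne l 0 with rfl | hl
      · simp [vnorm_single]
      · simpa [hl] using hx l hl
    · rintro ⟨x, hx, rfl⟩
      exact ⟨x, fun l _ => hx l (Set.mem_univ l), rfl⟩
  have hcont : Continuous fun x => vnorm (gmap T x) :=
    continuous_vnorm.comp <| continuous_pi fun i => continuous_finsetSum _ fun j _ => by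
      split_ifs <;> fun_prop
  have hcompact : IsCompact (gmapNorms T) :=
    himage ▸ (isCompact_univ_pi fun l => isCompact_setOf_vnorm_eq_one _).image hcont
  have hne : (gmapNorms T).Nonempty :=
    himage ▸ Set.Nonempty.image _ ⟨_, fun l _ => vnorm_single ⟨0, hs l⟩⟩
  obtain ⟨x, hx, hxinf⟩ : sInf (gmapNorms T) ∈ (fun x => vnorm (gmap T x)) '' S :=
    himage ▸ hcompact.sInf_mem hne
  exact ⟨x, fun l => hx l (Set.mem_univ l), hxinf⟩

lemma multiProd_update_eq_gmap (T : (∀ i, Fin (s i)) → ℝ)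
    (B : ∀ l, Matrix (Fin (s l)) (Fin (s l)) ℝ) (hB0 : B 0 = 1) (x : ∀ i, Fin (s i) → ℝ)
    (j : ∀ l, Fin (s l)) (hrow : ∀ l, l ≠ 0 → B l (j l) = x l) (i : Fin (s 0)) :
    multiProd T B (Function.update j 0 i) = gmap T x i := by
  rw [multiProd_apply, gmap_apply_eq_contract]
  congr 1
  funext l
  rcases eq_or_ne l 0 with rfl | hl
  · funext k
    simp [hB0, one_eq_pi_single]
  · simp [hl, hrow l hl]

end Tensor

theorem exists_orthogonal_fiber_attains_inf_general {d : ℕ}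
    {s : Fin (d+1) → ℕ} (hs : ∀ i, 0 < s i)
    (T : (∀ i, Fin (s i)) → ℝ) :
    ∃ Q : ∀ l : Fin (d+1), Fin (s l) → Fin (s l) → ℝ,
      (∀ l : Fin (d+1), l ≠ 0 →
        ∀ a b : Fin (s l), ∑ c, Q l a c * Q l b c = if a = b then (1:ℝ) else 0) ∧
      tnorm (multiProd T
        (fun l a b => if l = 0 then (if a = b then (1:ℝ) else 0) else Q l a b)) = tnorm T ∧
      tinf (multiProd T
        (fun l a b => if l = 0 then (if a = b then (1:ℝ) else 0) else Q l a b)) = tinf T ∧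
      tcond (multiProd T
        (fun l a b => if l = 0 then (if a = b then (1:ℝ) else 0) else Q l a b)) = tcond T ∧
      vnorm (fun i : Fin (s 0) =>
        multiProd T (fun l a b => if l = 0 then (if a = b then (1:ℝ) else 0) else Q l a b)
          (fun l => if h : l = 0 then Fin.cast (congrArg s h.symm) i else ⟨0, hs l⟩)) =
        tinf T := by
  obtain ⟨x, hx, hxinf⟩ := exists_unit_vnorm_gmap_eq_tinf hs T
  choose Q hQ hrow using fun l => exists_mul_transpose_eq_one_row_eq ⟨0, hs l⟩ (hx l)
  set B : ∀ l, Matrix (Fin (s l)) (Fin (s l)) ℝ :=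
    fun l a b => if l = 0 then (if a = b then (1:ℝ) else 0) else Q l a b with hB
  have hB0 : B 0 = 1 := by
    ext a b
    simp [hB, one_apply]
  have hBQ : ∀ l, l ≠ 0 → B l = Q l := fun l hl => by
    ext a b
    simp [hB, hl]
  have hBorth : ∀ l, B l * (B l)ᵀ = 1 := fun l => by
    rcases eq_or_ne l 0 with rfl | hl
    · simp [hB0]
    · rw [hBQ l hl, hQ l]
  have hvalues := gmapNorms_multiProd T B hB0 hBorth
  have hnorm : tnorm (multiProd T B) = tnorm T := congrArg sSup hvalues
  have hinf : tinf (multiProd T B) = tinf T := congrArg sInf hvalues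
  have hfiber : (fun i => multiProd T B
      (fun l => if h : l = 0 then Fin.cast (congrArg s h.symm) i else ⟨0, hs l⟩)) = gmap T x := by
    funext i
    rw [← multiProd_update_eq_gmap T B hB0 x (fun l => ⟨0, hs l⟩)
      (fun l hl => by rw [hBQ l hl, hrow l]) i]
    congr 1
    funext l
    rcases eq_or_ne l 0 with rfl | hl <;> simp [*]
  exact ⟨Q, fun l _ => mul_transpose_eq_one_iff.mp (hQ l), hnorm, hinf,
    congrArg₂ (· / ·) hnorm hinf, by rw [hfiber, hxinf]⟩

/-- Theorem A.3 of the paper. For any order-`N` tensor `T` (`N = d+1 ≥ 2`,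
mode `0` output) there are orthogonal matrices `Q l` (at the input modes `l ≠ 0`) such that
`V = T ×₂ Q₂ ⋯ ×_N Q_N` (identity at mode `0`) has `‖V‖₂ = ‖T‖₂`, `I(V) = I(T)`
(hence `κ(V) = κ(T)`), and the first fiber `v(i) = V(i,1,…,1)` has `‖v‖₂ = I(T)`. -/
theorem exists_orthogonal_fiber_attains_inf {d : ℕ} (hd : 1 ≤ d)
    {s : Fin (d+1) → ℕ} (hs : ∀ i, 0 < s i)
    (T : (∀ i, Fin (s i)) → ℝ) :
    ∃ Q : ∀ l : Fin (d+1), Fin (s l) → Fin (s l) → ℝ,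
      (∀ l : Fin (d+1), l ≠ 0 →
        ∀ a b : Fin (s l), ∑ c, Q l a c * Q l b c = if a = b then (1:ℝ) else 0) ∧
      tnorm (multiProd T
        (fun l a b => if l = 0 then (if a = b then (1:ℝ) else 0) else Q l a b)) = tnorm T ∧
      tinf (multiProd T
        (fun l a b => if l = 0 then (if a = b then (1:ℝ) else 0) else Q l a b)) = tinf T ∧
      tcond (multiProd T
        (fun l a b => if l = 0 then (if a = b then (1:ℝ) else 0) else Q l a b)) = tcond T ∧
      vnorm (fun i : Fin (s 0) =>
        multiProd T (fun l a b => if l = 0 then (if a = b then (1:ℝ) else 0) else Q l a b)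
          (fun l => if h : l = 0 then Fin.cast (congrArg s h.symm) i else ⟨0, hs l⟩)) =
        tinf T :=
  exists_orthogonal_fiber_attains_inf_general hs T
end
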